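/- Let Q be a dimer model and let F be a set of faces of Q forming a subsurface S such that the restriction of the strand diagram D_Q to S has no bad configurations. Then the dimer submodel Q^F is weakly consistent. In particular, every dimer submodel of a weakly consistent dimer model is weakly consistent. -/
import Mathlib


/-!
# Dimer models with boundary

A common framework for dimer models on oriented surfaces with boundary,
following "Consistency of dimer models on surfaces with boundary".

A dimer model is a quiver with faces (two families of faces, bounding
counterclockwise resp. clockwise cycles) embedded in an oriented surface
`S(Q)`.  The purely combinatorial data (quiver, faces, the dimer-algebra
relations identifying the two return paths of an internal arrow) is
formalized concretely; the topological data coming from the embedding into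
the glued surface (the homotopy relation on paths, whether the surface is a
sphere, orientation of simple cycle-walks) is axiomatized as part of the
structure `DimerModel`.
-/

/-- The data of a quiver: vertices, arrows, source and target maps. -/
structure QD where
  V : Type
  E : Type
  src : E → V
  tgt : E → V

namespace QD

/-- `IsChain Q v l w` : the list of arrows `l`, in order of traversal,
forms a composable path from `v` to `w`. -/
def IsChain (Q : QD) : Q.V → List Q.E → Q.V → Prop
  | v, [], w => v = w
  | v, e :: l, w => Q.src e = v ∧ Q.IsChain (Q.tgt e) l w

theorem IsChain.append {Q : QD} : ∀ {l l' : List Q.E} {v w x : Q.V},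
    Q.IsChain v l w → Q.IsChain w l' x → Q.IsChain v (l ++ l') x := by
  intro l
  induction l with
  | nil =>
    intro l' v w x h h'
    have hvw : v = w := h
    subst hvw
    exact h'
  | cons e l ih =>
    intro l' v w x h h'
    exact ⟨h.1, ih h.2 h'⟩

/-- A path from `v` to `w` in the quiver `Q`: a composable list of arrows,
in order of traversal. -/
structure Pth (Q : QD) (v w : Q.V) where
  edges : List Q.E
  chain : Q.IsChain v edges w

/-- The constant path at a vertex. -/
def Pth.nil (Q : QD) (v : Q.V) : Pth Q v v := ⟨[], rfl⟩

/-- Composition of paths: first `p`, then `q`. -/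
def Pth.comp {Q : QD} {u v w : Q.V} (p : Pth Q u v) (q : Pth Q v w) : Pth Q u w :=
  ⟨p.edges ++ q.edges, p.chain.append q.chain⟩

/-- `p` occurs in `q` as a subpath. -/
def IsSubpath {Q : QD} {v w a b : Q.V} (p : Pth Q v w) (q : Pth Q a b) : Prop :=
  ∃ (r : Pth Q a v) (s : Pth Q w b), q = r.comp (p.comp s)

/-- `p` occurs in `q` as a proper subpath. -/
def IsProperSubpath {Q : QD} {v w a b : Q.V} (p : Pth Q v w) (q : Pth Q a b) : Prop :=
  IsSubpath p q ∧ p.edges.length < q.edges.length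

end QD

open QD

/-- A quiver with faces: the combinatorial data underlying a dimer model with
boundary.  Faces come in two families, counterclockwise (`FCC`) and clockwise
(`FCL`), each face being given by its bounding cycle (a base vertex together
with the list of its arrows in order of traversal). -/
structure FQD extends QD where
  /-- counterclockwise faces -/
  FCC : Type
  /-- clockwise faces -/
  FCL : Type
  ccBase : FCC → V
  clBase : FCL → V
  /-- the bounding cycle of a counterclockwise face -/
  ccEdges : FCC → List E
  /-- the bounding cycle of a clockwise face -/
  clEdges : FCL → List E
  cc_chain : ∀ f, toQD.IsChain (ccBase f) (ccEdges f) (ccBase f)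
  cl_chain : ∀ f, toQD.IsChain (clBase f) (clEdges f) (clBase f)
  cc_ne : ∀ f, ccEdges f ≠ []
  cl_ne : ∀ f, clEdges f ≠ []
  /-- each arrow appears at most once in the bounding cycle of a face -/
  cc_nodup : ∀ f, (ccEdges f).Nodup
  cl_nodup : ∀ f, (clEdges f).Nodup
  /-- each arrow lies in at most one counterclockwise face -/
  cc_unique : ∀ e (f g : FCC), e ∈ ccEdges f → e ∈ ccEdges g → f = g
  /-- each arrow lies in at most one clockwise face -/
  cl_unique : ∀ e (f g : FCL), e ∈ clEdges f → e ∈ clEdges g → f = g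
  /-- each arrow lies in at least one face -/
  mem_face : ∀ e : E, (∃ f, e ∈ ccEdges f) ∨ (∃ f, e ∈ clEdges f)
  /-- local finiteness: every vertex is incident with finitely many arrows -/
  locally_finite : ∀ v : V, {e : E | src e = v ∨ tgt e = v}.Finite

namespace FQD

/-- An internal arrow: one lying in (exactly) two faces, i.e. in both a
counterclockwise and a clockwise face. -/
def IsInternal (Q : FQD) (e : Q.E) : Prop :=
  (∃ f, e ∈ Q.ccEdges f) ∧ (∃ f, e ∈ Q.clEdges f)

/-- A boundary arrow: one lying in only one face. -/
def IsBoundary (Q : FQD) (e : Q.E) : Prop := ¬ Q.IsInternal e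

/-- An internal vertex: one incident with no boundary arrow. -/
def InternalVertex (Q : FQD) (v : Q.V) : Prop :=
  ∀ e : Q.E, (Q.src e = v ∨ Q.tgt e = v) → Q.IsInternal e

/-- `r` is the counterclockwise return path `R_e^cc` of the arrow `e`: the
path from the head of `e` to the tail of `e` consisting of all arrows of the
counterclockwise face containing `e` except `e` itself. -/
def IsRetCC (Q : FQD) (e : Q.E) (r : Pth Q.toQD (Q.tgt e) (Q.src e)) : Prop :=
  ∃ (f : Q.FCC) (l1 l2 : List Q.E), Q.ccEdges f = l1 ++ e :: l2 ∧ r.edges = l2 ++ l1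

/-- `r` is the clockwise return path `R_e^cl` of the arrow `e`. -/
def IsRetCL (Q : FQD) (e : Q.E) (r : Pth Q.toQD (Q.tgt e) (Q.src e)) : Prop :=
  ∃ (f : Q.FCL) (l1 l2 : List Q.E), Q.clEdges f = l1 ++ e :: l2 ∧ r.edges = l2 ++ l1

/-- `l` is (the list of arrows of) a cycle traversing a counterclockwise face
once, i.e. a rotation of the bounding cycle of a counterclockwise face. -/
def IsCCFaceList (Q : FQD) (l : List Q.E) : Prop :=
  l ≠ [] ∧ ∃ (f : Q.FCC) (l1 l2 : List Q.E), Q.ccEdges f = l1 ++ l2 ∧ l = l2 ++ l1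

/-- `l` is a cycle traversing a clockwise face once. -/
def IsCLFaceList (Q : FQD) (l : List Q.E) : Prop :=
  l ≠ [] ∧ ∃ (f : Q.FCL) (l1 l2 : List Q.E), Q.clEdges f = l1 ++ l2 ∧ l = l2 ++ l1

/-- `l` is a cycle traversing a face once. -/
def IsFaceList (Q : FQD) (l : List Q.E) : Prop :=
  Q.IsCCFaceList l ∨ Q.IsCLFaceList l

/-- `c` is a face-path: a cycle traversing a counterclockwise face once. -/
def IsCCFacePath (Q : FQD) {v : Q.V} (c : Pth Q.toQD v v) : Prop :=
  Q.IsCCFaceList c.edges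

/-- `c` is a face-path: a cycle traversing a clockwise face once. -/
def IsCLFacePath (Q : FQD) {v : Q.V} (c : Pth Q.toQD v v) : Prop :=
  Q.IsCLFaceList c.edges

/-- `c` is a face-path at `v`: a cycle starting and ending at `v` which
travels around a face of `Q` once. -/
def IsFacePath (Q : FQD) {v : Q.V} (c : Pth Q.toQD v v) : Prop :=
  Q.IsFaceList c.edges

/-- A basic left-morph: replace one occurrence of the counterclockwise return
path `R_e^cc` of an internal arrow `e` inside a path by the clockwise return
path `R_e^cl`.  This generates the defining relations of the dimer algebra. -/
inductive LeftMorph (Q : FQD) : ∀ {v w : Q.V}, Pth Q.toQD v w → Pth Q.toQD v w → Prop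
  | mk {e : Q.E} (hint : Q.IsInternal e)
      {rcc rcl : Pth Q.toQD (Q.tgt e) (Q.src e)}
      (hcc : Q.IsRetCC e rcc) (hcl : Q.IsRetCL e rcl)
      {a b : Q.V} (pre : Pth Q.toQD a (Q.tgt e)) (post : Pth Q.toQD (Q.src e) b) :
      LeftMorph Q (pre.comp (rcc.comp post)) (pre.comp (rcl.comp post))

/-- A basic right-morph: replace one occurrence of `R_e^cl` by `R_e^cc`. -/
def RightMorph (Q : FQD) {v w : Q.V} (p q : Pth Q.toQD v w) : Prop :=
  Q.LeftMorph q p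

/-- Path-equivalence: two paths are path-equivalent iff they are equal in the
dimer algebra `A_Q`, i.e. iff they are related by a finite sequence of basic
morphs. -/
inductive PEquiv (Q : FQD) : ∀ {v w : Q.V}, Pth Q.toQD v w → Pth Q.toQD v w → Prop
  | of {v w : Q.V} {p q : Pth Q.toQD v w} : Q.LeftMorph p q → PEquiv Q p q
  | refl {v w : Q.V} (p : Pth Q.toQD v w) : PEquiv Q p p
  | symm {v w : Q.V} {p q : Pth Q.toQD v w} : PEquiv Q p q → PEquiv Q q p
  | trans {v w : Q.V} {p q r : Pth Q.toQD v w} : PEquiv Q p q → PEquiv Q q r → PEquiv Q p r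

/-- `FacePow Q p m q` : the path `q` is `p` composed with `m` face-paths,
i.e. `q` represents `[f^m p]`. -/
inductive FacePow (Q : FQD) {v w : Q.V} (p : Pth Q.toQD v w) : ℕ → Pth Q.toQD v w → Prop
  | zero : FacePow Q p 0 p
  | succ {m : ℕ} {q : Pth Q.toQD v w} (hq : FacePow Q p m q) {c : Pth Q.toQD w w}
      (hc : Q.IsFacePath c) : FacePow Q p (m + 1) (q.comp c)

/-- A path `p` is minimal if one cannot write `[p] = [q f^m]` for any `m ≥ 1`. -/
def Minimal (Q : FQD) {v w : Q.V} (p : Pth Q.toQD v w) : Prop :=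
  ¬ ∃ (m : ℕ) (q q' : Pth Q.toQD v w), 1 ≤ m ∧ Q.FacePow q m q' ∧ Q.PEquiv p q'

end FQD

/-- A dimer model with boundary: a quiver with faces together with the
(axiomatized) topology of the oriented surface `S(Q)` obtained by gluing the
faces: the homotopy (rel endpoints) relation `Htp` on paths, the proposition
`IsSphere` stating that `S(Q)` is a sphere, and the relation `SimpleCCW p q`
stating that the cycle-walk `q⁻¹ p` is a simple counterclockwise cycle-walk
on `S(Q)`. -/
structure DimerModel extends FQD where
  /-- homotopy of paths (rel endpoints) in the surface `S(Q)` -/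
  Htp : ∀ {v w : V}, Pth toQD v w → Pth toQD v w → Prop
  htp_refl : ∀ {v w : V} (p : Pth toQD v w), Htp p p
  htp_symm : ∀ {v w : V} {p q : Pth toQD v w}, Htp p q → Htp q p
  htp_trans : ∀ {v w : V} {p q r : Pth toQD v w}, Htp p q → Htp q r → Htp p r
  htp_comp : ∀ {u v w : V} {p p' : Pth toQD u v} {q q' : Pth toQD v w},
      Htp p p' → Htp q q' → Htp (p.comp q) (p'.comp q')
  /-- the two return paths of an internal arrow are homotopic in `S(Q)` -/
  htp_of_morph : ∀ {v w : V} {p q : Pth toQD v w}, FQD.LeftMorph toFQD p q → Htp p q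
  /-- face-paths are null-homotopic in `S(Q)` -/
  htp_face : ∀ {v : V} {c : Pth toQD v v}, FQD.IsFacePath toFQD c → Htp c (Pth.nil toQD v)
  /-- `S(Q)` is a sphere (without boundary) -/
  IsSphere : Prop
  /-- `SimpleCCW p q` : the paths `p, q` share only their endpoints and the
  cycle-walk `q⁻¹ p` is a simple counterclockwise cycle-walk on `S(Q)` -/
  SimpleCCW : ∀ {v w : V}, Pth toQD v w → Pth toQD v w → Prop
  /-- coherence of the orientation: the bounding cycle of a counterclockwise
  face is a simple counterclockwise cycle -/
  ccw_cc_face : ∀ {v : V} {c : Pth toQD v v}, FQD.IsCCFacePath toFQD c →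
      SimpleCCW c (Pth.nil toQD v)

namespace DimerModel

/-- Paths in the underlying quiver of a dimer model. -/
abbrev Path (Q : DimerModel) (v w : Q.V) : Type := Pth Q.toQD v w

/-- A dimer model is path-consistent if for all vertices `v, w` and every
homotopy class of paths in `S(Q)` from `v` to `w` (represented by a path
`p₀`), there is a minimal path `r` in that class, unique up to
path-equivalence, such that every path in the class is path-equivalent to
`f^m r` for a unique `m ≥ 0`. -/
def PathConsistent (Q : DimerModel) : Prop :=
  ∀ (v w : Q.V) (p₀ : Q.Path v w),
    ∃ r : Q.Path v w,
      FQD.Minimal Q.toFQD r ∧ Q.Htp r p₀ ∧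
      (∀ r' : Q.Path v w, FQD.Minimal Q.toFQD r' → Q.Htp r' p₀ →
        FQD.PEquiv Q.toFQD r r') ∧
      (∀ p : Q.Path v w, Q.Htp p p₀ →
        ∃! m : ℕ, ∃ q : Q.Path v w, FQD.FacePow Q.toFQD r m q ∧ FQD.PEquiv Q.toFQD p q)

/-- The dimer algebra `A_Q` is a cancellation algebra: equalities of paths in
`A_Q` may be cancelled on the left and on the right. -/
def Cancellative (Q : DimerModel) : Prop :=
  (∀ {u v w : Q.V} (a : Q.Path u v) (p q : Q.Path v w),
      FQD.PEquiv Q.toFQD (a.comp p) (a.comp q) → FQD.PEquiv Q.toFQD p q) ∧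
  (∀ {u v w : Q.V} (p q : Q.Path u v) (b : Q.Path v w),
      FQD.PEquiv Q.toFQD (p.comp b) (q.comp b) → FQD.PEquiv Q.toFQD p q)

/-- The surface `S(Q)` is simply connected: any two paths with the same
endpoints are homotopic. -/
def SimplyConnected (Q : DimerModel) : Prop :=
  ∀ {v w : Q.V} (p q : Q.Path v w), Q.Htp p q

end DimerModel

/-! ### Strand diagrams and strand-consistency

The strand diagram `D_Q` of a dimer model has one strand through the midpoint
of each arrow, following the zigzag paths of `Q`.  Strands correspond to
zigzag paths, and intersections of strands correspond to shared arrows of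
zigzag paths, so the three bad configurations may be phrased in terms of
zigzag paths. -/

namespace FQD

/-- `e'` immediately follows `e` (cyclically) in the bounding cycle of a
counterclockwise face: the pair `(e, e')` is a zig. -/
def ConsecCC (Q : FQD) (e e' : Q.E) : Prop :=
  ∃ f : Q.FCC, (∃ l1 l2, Q.ccEdges f = l1 ++ e :: e' :: l2) ∨
    (∃ l, Q.ccEdges f = e' :: (l ++ [e]))

/-- `e'` immediately follows `e` (cyclically) in the bounding cycle of a
clockwise face: the pair `(e, e')` is a zag. -/
def ConsecCL (Q : FQD) (e e' : Q.E) : Prop :=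
  ∃ f : Q.FCL, (∃ l1 l2, Q.clEdges f = l1 ++ e :: e' :: l2) ∨
    (∃ l, Q.clEdges f = e' :: (l ++ [e]))

/-- Consecutive arrows of a zigzag path, of parity `b` (`true` = zig, i.e.
contained in a counterclockwise face; `false` = zag). -/
def Consec (Q : FQD) (b : Bool) (e e' : Q.E) : Prop :=
  if b then Q.ConsecCC e e' else Q.ConsecCL e e'

/-- `Zigzag Q b l` : the list of arrows `l` is a segment of a zigzag path of
`Q`, where consecutive pairs of arrows lie alternately in counterclockwise
and clockwise faces; `b` is the parity of the first pair. -/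
inductive Zigzag (Q : FQD) : Bool → List Q.E → Prop
  | single (b : Bool) (e : Q.E) : Zigzag Q b [e]
  | cons {b : Bool} {e e' : Q.E} {l : List Q.E} :
      Q.Consec b e e' → Zigzag Q (!b) (e' :: l) → Zigzag Q b (e :: e' :: l)

end FQD

namespace DimerModel

/-- Bad configuration (1): a strand of `D_Q` with a null-homotopic
self-intersection. A zigzag path passes through the arrow `e` twice, first as
the start of a zig and then as the start of a zag (or vice versa: the parity
condition `l.length % 2 = 0`), and the segment between the two occurrences is
null-homotopic in `S(Q)`. -/
def BadSelfIntersection (Q : DimerModel) : Prop :=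
  ∃ (b : Bool) (e : Q.E) (l : List Q.E),
    FQD.Zigzag Q.toFQD b (e :: (l ++ [e])) ∧ l.length % 2 = 0 ∧
    ∃ c : Q.Path (Q.src e) (Q.src e),
      c.edges = e :: l ∧ Q.Htp c (Pth.nil Q.toQD (Q.src e))

/-- Bad configuration (2): a null-homotopic interior cycle of `D_Q`: a cyclic
(infinitely repeating) zigzag path whose underlying cycle is null-homotopic
in `S(Q)`. -/
def BadInteriorCycle (Q : DimerModel) : Prop :=
  ∃ (b : Bool) (e : Q.E) (l : List Q.E),
    FQD.Zigzag Q.toFQD b (e :: l) ∧ l.length % 2 = 1 ∧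
    FQD.Consec Q.toFQD (!b) (l.getLastD e) e ∧
    ∃ c : Q.Path (Q.src e) (Q.src e),
      c.edges = e :: l ∧ Q.Htp c (Pth.nil Q.toQD (Q.src e))

/-- Bad configuration (3): a bad lens: two zigzag segments which intersect
twice (at `α` and at `β`, with opposite zig/zag parities, so the crossings
are transversal), are oriented the same way between the intersections, do not
meet in between, and are homotopic in `S(Q)` (i.e. bound a null-homotopic
region). -/
def BadLens (Q : DimerModel) : Prop :=
  ∃ (b₁ b₂ : Bool) (α β : Q.E) (zs ws : List Q.E),
    b₁ ≠ b₂ ∧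
    FQD.Zigzag Q.toFQD b₁ (α :: (zs ++ [β])) ∧
    FQD.Zigzag Q.toFQD b₂ (α :: (ws ++ [β])) ∧
    (∀ e ∈ zs, e ∉ ws) ∧
    ∃ (p q : Q.Path (Q.src α) (Q.tgt β)),
      p.edges = α :: (zs ++ [β]) ∧ q.edges = α :: (ws ++ [β]) ∧ Q.Htp p q

/-- A dimer model is strand-consistent if its strand diagram `D_Q` is a
Postnikov diagram, i.e. has no bad configurations. -/
def StrandConsistent (Q : DimerModel) : Prop :=
  ¬ Q.BadSelfIntersection ∧ ¬ Q.BadInteriorCycle ∧ ¬ Q.BadLens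

end DimerModel

namespace DimerModel

/-- A dimer model (not on a sphere) is weakly consistent if its strand
diagram has no bad configurations (equivalently, it is path-consistent;
equivalently, its dimer algebra is cancellative). -/
def WeaklyConsistent (Q : DimerModel) : Prop :=
  ¬ Q.IsSphere ∧ Q.StrandConsistent

end DimerModel

/-! ### Universal covers of dimer models -/

/-- A map of dimer models: maps of vertices and arrows commuting with sources
and targets. -/
structure CoverMap (Qt Q : DimerModel) where
  mapV : Qt.V → Q.V
  mapE : Qt.E → Q.E
  map_src : ∀ e, Q.src (mapE e) = mapV (Qt.src e)
  map_tgt : ∀ e, Q.tgt (mapE e) = mapV (Qt.tgt e)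

namespace CoverMap

theorem chain_map {Qt Q : DimerModel} (φ : CoverMap Qt Q) :
    ∀ {l : List Qt.E} {v w : Qt.V}, QD.IsChain Qt.toQD v l w →
      QD.IsChain Q.toQD (φ.mapV v) (l.map φ.mapE) (φ.mapV w) := by
  intro l
  induction l with
  | nil =>
    intro v w h
    have hvw : v = w := h
    subst hvw
    rfl
  | cons e l ih =>
    intro v w h
    refine ⟨?_, ?_⟩
    · rw [φ.map_src e]
      exact congrArg φ.mapV h.1
    · rw [φ.map_tgt e]
      exact ih h.2

/-- The image of a path under a map of dimer models. -/
def mapPth {Qt Q : DimerModel} (φ : CoverMap Qt Q) {v w : Qt.V}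
    (p : Pth Qt.toQD v w) : Pth Q.toQD (φ.mapV v) (φ.mapV w) :=
  ⟨p.edges.map φ.mapE, φ.chain_map p.chain⟩

end CoverMap


/-- A dimer submodel `Q'` of `Q`: the dimer model induced by a set of faces
of `Q` whose union forms a connected subsurface `S(Q') ⊆ S(Q)`, consisting of
those faces together with all vertices and arrows of `Q` appearing in them.
It is presented by an embedding of quivers-with-faces which is injective on
vertices, arrows, and faces, preserves the bounding cycles of faces, and is
compatible with homotopy (homotopic paths in `S(Q')` are homotopic in
`S(Q)`). -/
structure SubmodelEmbedding (Q' Q : DimerModel) extends CoverMap Q' Q where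
  injV : Function.Injective mapV
  injE : Function.Injective mapE
  mapFCC : Q'.FCC → Q.FCC
  mapFCL : Q'.FCL → Q.FCL
  injFCC : Function.Injective mapFCC
  injFCL : Function.Injective mapFCL
  map_ccEdges : ∀ f, Q.ccEdges (mapFCC f) = (Q'.ccEdges f).map mapE
  map_clEdges : ∀ f, Q.clEdges (mapFCL f) = (Q'.clEdges f).map mapE
  htp_mono : ∀ {v w : Q'.V} (p q : Pth Q'.toQD v w),
      Q'.Htp p q → Q.Htp (toCoverMap.mapPth p) (toCoverMap.mapPth q)

namespace SubmodelEmbedding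

theorem getLastD_map {α β : Type} (f : α → β) (l : List α) (d : α) :
    (l.map f).getLastD (f d) = f (l.getLastD d) := by
  induction l generalizing d with
  | nil => rfl
  | cons a l ih => simp only [List.map_cons, List.getLastD_cons]; exact ih a

theorem consec_map {Q' Q : DimerModel} (ι : SubmodelEmbedding Q' Q)
    {b : Bool} {e e' : Q'.E} (h : FQD.Consec Q'.toFQD b e e') :
    FQD.Consec Q.toFQD b (ι.mapE e) (ι.mapE e') := by
  cases b with
  | true =>
    obtain ⟨f, h⟩ := h
    refine ⟨ι.mapFCC f, ?_⟩
    rcases h with ⟨l1, l2, hl⟩ | ⟨l, hl⟩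
    · exact Or.inl ⟨l1.map ι.mapE, l2.map ι.mapE, by rw [ι.map_ccEdges, hl]; simp⟩
    · exact Or.inr ⟨l.map ι.mapE, by rw [ι.map_ccEdges, hl]; simp⟩
  | false =>
    obtain ⟨f, h⟩ := h
    refine ⟨ι.mapFCL f, ?_⟩
    rcases h with ⟨l1, l2, hl⟩ | ⟨l, hl⟩
    · exact Or.inl ⟨l1.map ι.mapE, l2.map ι.mapE, by rw [ι.map_clEdges, hl]; simp⟩
    · exact Or.inr ⟨l.map ι.mapE, by rw [ι.map_clEdges, hl]; simp⟩

theorem zigzag_map {Q' Q : DimerModel} (ι : SubmodelEmbedding Q' Q)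
    {b : Bool} {l : List Q'.E} (h : FQD.Zigzag Q'.toFQD b l) :
    FQD.Zigzag Q.toFQD b (l.map ι.mapE) := by
  induction h with
  | single b e => exact FQD.Zigzag.single b (ι.mapE e)
  | cons hc _ ih => exact FQD.Zigzag.cons (ι.consec_map hc) ih

theorem htp_nil {Q' Q : DimerModel} (ι : SubmodelEmbedding Q' Q)
    {v : Q'.V} {c : Pth Q'.toQD v v}
    (h : Q'.Htp c (Pth.nil Q'.toQD v)) :
    Q.Htp (ι.toCoverMap.mapPth c) (Pth.nil Q.toQD (ι.mapV v)) :=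
  ι.htp_mono _ _ h

theorem badSelfIntersection {Q' Q : DimerModel} (ι : SubmodelEmbedding Q' Q)
    (h : Q'.BadSelfIntersection) : Q.BadSelfIntersection := by
  obtain ⟨b, e, l, hz, hpar, c, hce, hc⟩ := h
  refine ⟨b, ι.mapE e, l.map ι.mapE, ?_, by simpa using hpar, ?_⟩
  · have := ι.zigzag_map hz
    simpa using this
  · rw [ι.map_src e]
    refine ⟨ι.toCoverMap.mapPth c, ?_, ι.htp_nil hc⟩
    simp [CoverMap.mapPth, hce]

theorem badInteriorCycle {Q' Q : DimerModel} (ι : SubmodelEmbedding Q' Q)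
    (h : Q'.BadInteriorCycle) : Q.BadInteriorCycle := by
  obtain ⟨b, e, l, hz, hpar, hcon, c, hce, hc⟩ := h
  refine ⟨b, ι.mapE e, l.map ι.mapE, ?_, by simpa using hpar, ?_, ?_⟩
  · have := ι.zigzag_map hz
    simpa using this
  · rw [getLastD_map]
    exact ι.consec_map hcon
  · rw [ι.map_src e]
    refine ⟨ι.toCoverMap.mapPth c, ?_, ι.htp_nil hc⟩
    simp [CoverMap.mapPth, hce]

theorem badLens {Q' Q : DimerModel} (ι : SubmodelEmbedding Q' Q)
    (h : Q'.BadLens) : Q.BadLens := by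
  obtain ⟨b₁, b₂, α, β, zs, ws, hb, hz1, hz2, hdisj, p, q, hp, hq, hpq⟩ := h
  refine ⟨b₁, b₂, ι.mapE α, ι.mapE β, zs.map ι.mapE, ws.map ι.mapE, hb, ?_, ?_, ?_, ?_⟩
  · have := ι.zigzag_map hz1
    simpa using this
  · have := ι.zigzag_map hz2
    simpa using this
  · intro e he hw
    obtain ⟨x, hx, rfl⟩ := List.mem_map.mp he
    obtain ⟨y, hy, hxy⟩ := List.mem_map.mp hw
    exact hdisj x hx (ι.injE hxy.symm ▸ hy)
  · rw [ι.map_src α, ι.map_tgt β]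
    refine ⟨ι.toCoverMap.mapPth p, ι.toCoverMap.mapPth q, ?_, ?_, ι.htp_mono _ _ hpq⟩
    · simp [CoverMap.mapPth, hp]
    · simp [CoverMap.mapPth, hq]

theorem strandConsistent {Q' Q : DimerModel} (ι : SubmodelEmbedding Q' Q)
    (h : Q.StrandConsistent) : Q'.StrandConsistent :=
  ⟨fun h' => h.1 (ι.badSelfIntersection h'),
   fun h' => h.2.1 (ι.badInteriorCycle h'),
   fun h' => h.2.2 (ι.badLens h')⟩

end SubmodelEmbedding

/-- **Corollary 5.2 (dimer-submodel-consistent).**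
Let `Q` be a dimer model and let `F` be a set of faces of `Q` forming a
subsurface `S` such that the restriction of the strand diagram `D_Q` to `S`
(which equals the strand diagram of the dimer submodel `Q^F`) has no bad
configurations.  Then `Q^F` is weakly consistent.  In particular, every dimer
submodel of a weakly consistent dimer model is weakly consistent.
(The surface of a dimer submodel is never a sphere when weak consistency is
in question; this is recorded by the hypothesis `hns`.) -/
theorem submodel_weaklyConsistent (Q Q' : DimerModel)
    (ι : SubmodelEmbedding Q' Q) (hns : ¬ Q'.IsSphere) :
    (Q'.StrandConsistent → Q'.WeaklyConsistent) ∧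
    (Q.WeaklyConsistent → Q'.WeaklyConsistent) :=
  ⟨fun h => ⟨hns, h⟩, fun h => ⟨hns, ι.strandConsistent h.2⟩⟩
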